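/- Let Z = (a_1,…,a_{m+1}; b_1,…,b_m) be a special symbol of defect 1 and Z' = (c_1,…,c_{m'}; d_1,…,d_{m'}) a special symbol of defect 0 with m' = m or m' = m+1. Then: (i) if m' = m+1, Z' is regular and D_Z = {Z'}, then c_i > a_i and d_i > b_i for every index i for which both entries exist; (ii) if m' = m, Z is regular and D_{Z'} = {Z}, then a_i > c_i and b_i > d_i for every index i for which both entries exist. -/

import Mathlib

open scoped symmDiff

/-- A symbol: a pair of finsets of naturals (its two rows, each read in
strictly decreasing order). -/
abbrev Symb :=  Finset ℕ × Finset ℕ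

/-- The strictly decreasing enumeration of a finset of naturals. -/
def rowList (s : Finset ℕ) : List ℕ := (s.sort (· ≤ ·)).reverse

/-- The `i`-th entry (0-based) of the strictly decreasing enumeration of `s`. -/
def ent (s : Finset ℕ) (i : ℕ) : Option ℕ := (rowList s)[i]?

/-- Impose a relation on two optional entries whenever both exist. -/
def oRel (r : ℕ → ℕ → Prop) : Option ℕ → Option ℕ → Prop
  | some x, some y => r x y
  | _, _ => True

/-- `Z` is a special symbol of defect 1 and size `(m+1, m)`. -/
def IsSpecial1 (Z : Symb) (m : ℕ) : Prop :=
  Z.1.card = m + 1 ∧ Z.2.card = m ∧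
  (∀ i, oRel (· ≥ ·) (ent Z.1 i) (ent Z.2 i)) ∧
  (∀ i, oRel (· ≥ ·) (ent Z.2 i) (ent Z.1 (i + 1)))

/-- `Z'` is a special symbol of defect 0 and size `(m', m')`. -/
def IsSpecial0 (Z : Symb) (m' : ℕ) : Prop :=
  Z.1.card = m' ∧ Z.2.card = m' ∧
  (∀ i, oRel (· ≥ ·) (ent Z.1 i) (ent Z.2 i)) ∧
  (∀ i, oRel (· ≥ ·) (ent Z.2 i) (ent Z.1 (i + 1)))

/-- `Z_I`: the entries of `Z` lying in exactly one row (row remembered). -/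
def ZI (Z : Symb) : Symb := (Z.1 \ Z.2, Z.2 \ Z.1)

/-- `M` is a subset of `Z_I`. -/
def SubZI (M Z : Symb) : Prop := M.1 ⊆ Z.1 \ Z.2 ∧ M.2 ⊆ Z.2 \ Z.1

/-- `Z` is regular: no degenerate entries. -/
def Regular (Z : Symb) : Prop := Disjoint Z.1 Z.2

/-- `Λ_M`: exchange the rows of the entries of `M`. -/
def lam (Z M : Symb) : Symb := ((Z.1 \ M.1) ∪ M.2, (Z.2 \ M.2) ∪ M.1)

/-- `S̄_Z = {Λ_M : M ⊆ Z_I}`. -/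
def Sbar (Z : Symb) : Set Symb := {Λ | ∃ M, SubZI M Z ∧ Λ = lam Z M}

/-- Size and inequality conditions of `B̄⁺_{Z,Z'}` in the case `m' = m`. -/
def Bm (Λ Λ' : Symb) : Prop :=
  Λ'.1.card = Λ.2.card ∧ Λ'.2.card + 1 = Λ.1.card ∧
  (∀ i, oRel (· > ·) (ent Λ.1 i) (ent Λ'.2 i)) ∧
  (∀ i, oRel (· ≥ ·) (ent Λ'.2 i) (ent Λ.1 (i + 1))) ∧
  (∀ i, oRel (· > ·) (ent Λ.2 i) (ent Λ'.1 (i + 1))) ∧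
  (∀ i, oRel (· ≥ ·) (ent Λ'.1 i) (ent Λ.2 i))

/-- Size and inequality conditions of `B̄⁺_{Z,Z'}` in the case `m' = m + 1`. -/
def Bm1 (Λ Λ' : Symb) : Prop :=
  Λ'.1.card = Λ.2.card + 1 ∧ Λ'.2.card = Λ.1.card ∧
  (∀ i, oRel (· ≥ ·) (ent Λ.1 i) (ent Λ'.2 i)) ∧
  (∀ i, oRel (· > ·) (ent Λ'.2 i) (ent Λ.1 (i + 1))) ∧
  (∀ i, oRel (· ≥ ·) (ent Λ.2 i) (ent Λ'.1 (i + 1))) ∧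
  (∀ i, oRel (· > ·) (ent Λ'.1 i) (ent Λ.2 i))

/-- The relation `B̄⁺_{Z,Z'}`. -/
def BbarPlus (Z Z' : Symb) (m m' : ℕ) (Λ Λ' : Symb) : Prop :=
  Λ ∈ Sbar Z ∧ Λ' ∈ Sbar Z' ∧
  ((m' = m ∧ Bm Λ Λ') ∨ (m' = m + 1 ∧ Bm1 Λ Λ'))

/-- The relation `D_{Z,Z'}`. -/
def DRel (Z Z' : Symb) (m m' : ℕ) (A A' : Symb) : Prop :=
  BbarPlus Z Z' m m' A A' ∧
  A.1.card = m + 1 ∧ A.2.card = m ∧ A'.1.card = m' ∧ A'.2.card = m'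

/-- `{c, d}` is a consecutive pair in `Z_I`. -/
def ConsecPair (Z : Symb) (c d : ℕ) : Prop :=
  c ∈ Z.1 \ Z.2 ∧ d ∈ Z.2 \ Z.1 ∧
  ∀ x ∈ (Z.1 \ Z.2) ∪ (Z.2 \ Z.1), ¬(min c d < x ∧ x < max c d)


/-
A special symbol is regular exactly when the sequence `a₁, b₁, a₂, b₂, …` obtained by reading its
two rows alternately is strictly decreasing, and all conditions defining `B̄⁺` compare consecutive
terms of the interleaved sequences of the two symbols. Suppose the conclusion fails and take the
last position `n` where it fails. Exchanging the `n`-th and `(n+1)`-st terms of the strictly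
decreasing sequence moves one entry into each row, so it yields another member of `S̄`, and the
failure at `n` together with the inequality at `n + 1` shows that it still satisfies the
conditions of `B̄⁺`. This contradicts the uniqueness of the partner.
-/

open Function

lemma forall_nat_iff_two_mul {P : ℕ → Prop} : (∀ n, P n) ↔ (∀ i, P (2 * i)) ∧ ∀ i, P (2 * i + 1) :=
  ⟨fun h => ⟨fun i => h _, fun i => h _⟩, fun h n => by
    obtain ⟨i, rfl | rfl⟩ := Nat.even_or_odd' n
    exacts [h.1 i, h.2 i]⟩

@[simp] lemma oRel_some_some {r : ℕ → ℕ → Prop} {x y : ℕ} : oRel r (some x) (some y) ↔ r x y :=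
  Iff.rfl

@[simp] lemma oRel_none_left {r : ℕ → ℕ → Prop} {b : Option ℕ} : oRel r none b := trivial

@[simp] lemma oRel_none_right {r : ℕ → ℕ → Prop} {a : Option ℕ} : oRel r a none := by
  cases a <;> trivial

def StrictAntiOpt (f : ℕ → Option ℕ) : Prop :=
  ∀ j k, j < k → oRel (· > ·) (f j) (f k)

namespace StrictAntiOpt

variable {f : ℕ → Option ℕ}

lemma of_succ (hf : ∀ n, oRel (· > ·) (f n) (f (n + 1)))
    (hdom : ∀ n, (f (n + 1)).isSome → (f n).isSome) : StrictAntiOpt f := by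
  intro j k hjk
  induction k, hjk using Nat.le_induction with
  | base => exact hf j
  | succ k _ ih =>
    rcases hz : f (k + 1) with _ | z
    · exact oRel_none_right
    obtain ⟨w, hw⟩ := Option.isSome_iff_exists.1 (hdom k (by simp [hz]))
    have hwz := hf k
    rw [hw, hz] at hwz
    rw [hw] at ih
    rcases hv : f j with _ | v
    · trivial
    · rw [hv] at ih
      exact lt_trans (α := ℕ) hwz ih

lemma eq_of_eq_some (hf : StrictAntiOpt f) {j k x : ℕ} (hj : f j = some x) (hk : f k = some x) :
    j = k := by
  by_contra hne
  rcases Nat.lt_or_gt_of_ne hne with h | h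
  · simpa [hj, hk] using hf j k h
  · simpa [hj, hk] using hf k j h

lemma update (hf : StrictAntiOpt f) {i y : ℕ} (hlt : ∀ k < i, oRel (· > ·) (f k) (some y))
    (hgt : ∀ k, i < k → oRel (· > ·) (some y) (f k)) : StrictAntiOpt (update f i (some y)) := by
  intro j k hjk
  simp only [update_apply]
  split_ifs with hj hk hk
  · omega
  · exact hgt k (hj ▸ hjk)
  · exact hlt j (hk ▸ hjk)
  · exact hf j k hjk

end StrictAntiOpt

lemma pairwise_gt_iff_strictAntiOpt {L : List ℕ} :
    L.Pairwise (· > ·) ↔ StrictAntiOpt (L[·]?) := by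
  rw [List.pairwise_iff_getElem]
  constructor
  · intro h j k hjk
    dsimp only
    rcases lt_or_ge k L.length with hk | hk
    · rw [List.getElem?_eq_getElem (by omega), List.getElem?_eq_getElem hk]
      exact h j k _ hk hjk
    · rw [List.getElem?_eq_none hk]
      exact oRel_none_right
  · intro h j k hj hk hjk
    simpa [List.getElem?_eq_getElem hj, List.getElem?_eq_getElem hk] using h j k hjk

lemma rowList_pairwise (s : Finset ℕ) : (rowList s).Pairwise (· > ·) := by
  rw [rowList, List.pairwise_reverse]
  exact s.sortedLT_sort.pairwise

lemma mem_rowList {s : Finset ℕ} {x : ℕ} : x ∈ rowList s ↔ x ∈ s := by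
  simp [rowList]

lemma rowList_toFinset {L : List ℕ} (h : L.Pairwise (· > ·)) : rowList L.toFinset = L := by
  have hsort : L.reverse.Pairwise (· ≤ ·) := List.pairwise_reverse.2 (h.imp le_of_lt)
  have hnodup : L.reverse.Nodup := List.nodup_reverse.2 h.nodup
  rw [rowList, ← List.toFinset_reverse, (List.toFinset_sort (· ≤ ·) hnodup).2 hsort,
    List.reverse_reverse]

lemma ent_strictAntiOpt (s : Finset ℕ) : StrictAntiOpt (ent s) :=
  pairwise_gt_iff_strictAntiOpt.1 (rowList_pairwise s)

lemma ent_isSome_iff {s : Finset ℕ} {i : ℕ} : (ent s i).isSome ↔ i < s.card := by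
  simp [ent, rowList]

lemma mem_iff_exists_ent {s : Finset ℕ} {x : ℕ} : x ∈ s ↔ ∃ i, ent s i = some x := by
  rw [← mem_rowList, List.mem_iff_getElem?]
  rfl

lemma mem_of_ent_eq_some {s : Finset ℕ} {i x : ℕ} (h : ent s i = some x) : x ∈ s :=
  mem_iff_exists_ent.2 ⟨i, h⟩

lemma card_eq_of_ent_eq_update {s t : Finset ℕ} {i x y : ℕ} (hx : ent s i = some x)
    (h : ent t = update (ent s) i (some y)) : t.card = s.card := by
  refine eq_of_forall_lt_iff fun k => ?_
  rw [← ent_isSome_iff, ← ent_isSome_iff, h, update_apply]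
  split_ifs with hk
  · simp [hk, hx]
  · rfl

lemma ent_insert_erase {s : Finset ℕ} {i x y : ℕ} (hx : ent s i = some x) (hy : y ∉ s)
    (hlt : ∀ k < i, oRel (· > ·) (ent s k) (some y))
    (hgt : ∀ k, i < k → oRel (· > ·) (some y) (ent s k)) :
    ent (insert y (s.erase x)) = update (ent s) i (some y) := by
  have hi : i < (rowList s).length := by
    simpa [rowList] using ent_isSome_iff.1 (by simp [hx])
  set L := (rowList s).set i y
  have hL : (L[·]?) = update (ent s) i (some y) := by
    funext k
    simp only [L, List.getElem?_set, hi, if_true, update_apply, ent, eq_comm]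
  have hsorted : L.Pairwise (· > ·) :=
    pairwise_gt_iff_strictAntiOpt.2 (hL ▸ (ent_strictAntiOpt s).update hlt hgt)
  have hfinset : L.toFinset = insert y (s.erase x) := by
    ext a
    rw [List.mem_toFinset, List.mem_iff_getElem?, Finset.mem_insert, Finset.mem_erase,
      mem_iff_exists_ent]
    change (∃ k, (L[·]?) k = some a) ↔ _
    rw [hL]
    constructor
    · rintro ⟨k, hk⟩
      rw [update_apply] at hk
      split_ifs at hk with hki
      · exact Or.inl (Option.some_inj.1 hk).symm
      · refine Or.inr ⟨?_, k, hk⟩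
        rintro rfl
        exact hki ((ent_strictAntiOpt s).eq_of_eq_some hk hx)
    · rintro (rfl | ⟨hax, k, hk⟩)
      · exact ⟨i, by simp⟩
      · refine ⟨k, ?_⟩
        rw [update_of_ne (by rintro rfl; exact hax (Option.some_inj.1 (hk.symm.trans hx)))]
        exact hk
  funext k
  change (rowList _)[k]? = _
  rw [← hfinset, rowList_toFinset hsorted]
  exact congrFun hL k

/-- The entries `a₁, b₁, a₂, b₂, …` of a symbol `(a₁, a₂, …; b₁, b₂, …)`, read alternately from
its two rows. -/
def interleaved (Λ : Symb) (n : ℕ) : Option ℕ :=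
  ent (if Even n then Λ.1 else Λ.2) (n / 2)

section Interleaved

variable {Λ : Symb}

@[simp] lemma interleaved_two_mul (i : ℕ) : interleaved Λ (2 * i) = ent Λ.1 i := by
  simp [interleaved]

@[simp] lemma interleaved_two_mul_add_one (i : ℕ) :
    interleaved Λ (2 * i + 1) = ent Λ.2 i := by
  simp [interleaved, show (2 * i + 1) / 2 = i by omega]

lemma interleaved_isSome_iff (h₁ : Λ.2.card ≤ Λ.1.card) (h₂ : Λ.1.card ≤ Λ.2.card + 1) {n : ℕ} :
    (interleaved Λ n).isSome ↔ n < Λ.1.card + Λ.2.card := by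
  obtain ⟨i, rfl | rfl⟩ := Nat.even_or_odd' n <;> simp only [interleaved_two_mul,
    interleaved_two_mul_add_one, ent_isSome_iff] <;> omega

lemma forall_oRel_ent_of_interleaved {r : ℕ → ℕ → Prop} {Λ' : Symb}
    (h : ∀ n, oRel r (interleaved Λ n) (interleaved Λ' n)) (i : ℕ) :
    oRel r (ent Λ.1 i) (ent Λ'.1 i) ∧ oRel r (ent Λ.2 i) (ent Λ'.2 i) :=
  ⟨by simpa using h (2 * i), by simpa using h (2 * i + 1)⟩

lemma oRel_gt_of_ge_of_disjoint {s t : Finset ℕ} (hst : Disjoint s t) {i j : ℕ}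
    (h : oRel (· ≥ ·) (ent s i) (ent t j)) : oRel (· > ·) (ent s i) (ent t j) := by
  rcases hx : ent s i with _ | x <;> rcases hy : ent t j with _ | y <;> simp only [hx, hy,
    oRel_none_left, oRel_none_right, oRel_some_some] at h ⊢
  refine lt_of_le_of_ne h fun hxy => Finset.disjoint_left.1 hst (mem_of_ent_eq_some hx) ?_
  exact hxy ▸ mem_of_ent_eq_some hy

lemma strictAntiOpt_interleaved (hreg : Regular Λ) (hcard₁ : Λ.2.card ≤ Λ.1.card)
    (hcard₂ : Λ.1.card ≤ Λ.2.card + 1) (h₁ : ∀ i, oRel (· ≥ ·) (ent Λ.1 i) (ent Λ.2 i))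
    (h₂ : ∀ i, oRel (· ≥ ·) (ent Λ.2 i) (ent Λ.1 (i + 1))) : StrictAntiOpt (interleaved Λ) := by
  refine .of_succ (forall_nat_iff_two_mul.2 ⟨fun i => ?_, fun i => ?_⟩) fun n hn => ?_
  · simpa using oRel_gt_of_ge_of_disjoint hreg (h₁ i)
  · simpa [show 2 * i + 1 + 1 = 2 * (i + 1) by ring] using
      oRel_gt_of_ge_of_disjoint hreg.symm (h₂ i)
  · rw [interleaved_isSome_iff hcard₁ hcard₂] at hn ⊢
    omega

end Interleaved

def Interlaces (u v : ℕ → Option ℕ) : Prop :=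
  ∀ n, oRel (· ≥ ·) (u n) (v (n + 1)) ∧ oRel (· > ·) (v n) (u (n + 1))

lemma bm1_iff_interlaces {Λ Λ' : Symb} : Bm1 Λ Λ' ↔
    Λ'.1.card = Λ.2.card + 1 ∧ Λ'.2.card = Λ.1.card ∧
      Interlaces (interleaved Λ) (interleaved Λ') := by
  simp only [Bm1, Interlaces, forall_and]
  rw [forall_nat_iff_two_mul (P := fun n => oRel _ (interleaved _ n) _),
    forall_nat_iff_two_mul (P := fun n => oRel _ (interleaved _ n) _)]
  simp only [interleaved_two_mul, interleaved_two_mul_add_one,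
    show ∀ i, 2 * i + 1 + 1 = 2 * (i + 1) by omega]
  tauto

lemma bm_iff_interlaces {Λ Λ' : Symb} : Bm Λ Λ' ↔
    Λ'.1.card = Λ.2.card ∧ Λ'.2.card + 1 = Λ.1.card ∧
      Interlaces (interleaved Λ') (interleaved Λ) := by
  simp only [Bm, Interlaces, forall_and]
  rw [forall_nat_iff_two_mul (P := fun n => oRel _ (interleaved _ n) _),
    forall_nat_iff_two_mul (P := fun n => oRel _ (interleaved _ n) _)]
  simp only [interleaved_two_mul, interleaved_two_mul_add_one,
    show ∀ i, 2 * i + 1 + 1 = 2 * (i + 1) by omega]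
  tauto

lemma self_mem_Sbar (Z : Symb) : Z ∈ Sbar Z :=
  ⟨(∅, ∅), ⟨Finset.empty_subset _, Finset.empty_subset _⟩, by simp [lam]⟩

lemma swap_mem_Sbar {Z : Symb} {x y : ℕ} (hx : x ∈ Z.1) (hy : y ∈ Z.2) (hreg : Regular Z) :
    (insert y (Z.1.erase x), insert x (Z.2.erase y)) ∈ Sbar Z := by
  refine ⟨({x}, {y}), ⟨?_, ?_⟩, ?_⟩
  · simpa using ⟨hx, Finset.disjoint_left.1 hreg hx⟩
  · simpa using ⟨hy, Finset.disjoint_right.1 hreg hy⟩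
  · simp [lam, Finset.sdiff_singleton_eq_erase, Finset.union_singleton]

lemma exists_mem_Sbar_interleaved_eq_comp_swap {Λ : Symb} (hreg : Regular Λ)
    (hΛ : StrictAntiOpt (interleaved Λ)) {n x y : ℕ} (hx : interleaved Λ n = some x)
    (hy : interleaved Λ (n + 1) = some y) :
    ∃ Λ'' ∈ Sbar Λ, Λ''.1.card = Λ.1.card ∧ Λ''.2.card = Λ.2.card ∧
      interleaved Λ'' = interleaved Λ ∘ Equiv.swap n (n + 1) := by
  have hpos : ∀ j k, j < k → ∀ a b, interleaved Λ j = a → interleaved Λ k = b →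
      oRel (· > ·) a b := fun j k hjk a b ha hb => ha ▸ hb ▸ hΛ j k hjk
  rw [Equiv.comp_swap_eq_update, hx, hy]
  obtain ⟨i, rfl | rfl⟩ := Nat.even_or_odd' n
  · simp only [interleaved_two_mul, interleaved_two_mul_add_one] at hx hy
    have h₁ : ent (insert y (Λ.1.erase x)) = update (ent Λ.1) i (some y) :=
      ent_insert_erase hx (Finset.disjoint_right.1 hreg (mem_of_ent_eq_some hy))
        (fun k hk => hpos (2 * k) (2 * i + 1) (by omega) _ _ (by simp) (by simp [hy]))
        (fun k hk => hpos (2 * i + 1) (2 * k) (by omega) _ _ (by simp [hy]) (by simp))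
    have h₂ : ent (insert x (Λ.2.erase y)) = update (ent Λ.2) i (some x) :=
      ent_insert_erase hy (Finset.disjoint_left.1 hreg (mem_of_ent_eq_some hx))
        (fun k hk => hpos (2 * k + 1) (2 * i) (by omega) _ _ (by simp) (by simp [hx]))
        (fun k hk => hpos (2 * i) (2 * k + 1) (by omega) _ _ (by simp [hx]) (by simp))
    refine ⟨_, swap_mem_Sbar (mem_of_ent_eq_some hx) (mem_of_ent_eq_some hy) hreg,
      card_eq_of_ent_eq_update hx h₁, card_eq_of_ent_eq_update hy h₂, funext fun k => ?_⟩
    obtain ⟨l, rfl | rfl⟩ := Nat.even_or_odd' k <;>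
      simp only [interleaved_two_mul, interleaved_two_mul_add_one, h₁, h₂, update_apply] <;>
      split_ifs <;> first | rfl | omega
  · simp only [interleaved_two_mul, interleaved_two_mul_add_one,
      show 2 * i + 1 + 1 = 2 * (i + 1) by ring] at hx hy
    have h₁ : ent (insert x (Λ.1.erase y)) = update (ent Λ.1) (i + 1) (some x) :=
      ent_insert_erase hy (Finset.disjoint_right.1 hreg (mem_of_ent_eq_some hx))
        (fun k hk => hpos (2 * k) (2 * i + 1) (by omega) _ _ (by simp) (by simp [hx]))
        (fun k hk => hpos (2 * i + 1) (2 * k) (by omega) _ _ (by simp [hx]) (by simp))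
    have h₂ : ent (insert y (Λ.2.erase x)) = update (ent Λ.2) i (some y) :=
      ent_insert_erase hx (Finset.disjoint_left.1 hreg (mem_of_ent_eq_some hy))
        (fun k hk => hpos (2 * k + 1) (2 * (i + 1)) (by omega) _ _ (by simp) (by simp [hy]))
        (fun k hk => hpos (2 * (i + 1)) (2 * k + 1) (by omega) _ _ (by simp [hy]) (by simp))
    refine ⟨_, swap_mem_Sbar (mem_of_ent_eq_some hy) (mem_of_ent_eq_some hx) hreg,
      card_eq_of_ent_eq_update hy h₁, card_eq_of_ent_eq_update hx h₂, funext fun k => ?_⟩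
    obtain ⟨l, rfl | rfl⟩ := Nat.even_or_odd' k <;>
      simp only [interleaved_two_mul, interleaved_two_mul_add_one, h₁, h₂, update_apply] <;>
      split_ifs <;> first | rfl | omega

namespace Interlaces

variable {u v : ℕ → Option ℕ}

lemma comp_swap (huv : Interlaces u v) {n x x' y : ℕ} (hx : v n = some x)
    (hx' : v (n + 1) = some x') (hy : u n = some y) (hx'x : x' < x) (hxy : x ≤ y)
    (hnext : oRel (· > ·) (v (n + 1)) (u (n + 1))) :
    Interlaces u (v ∘ Equiv.swap n (n + 1)) := by
  intro k
  simp only [comp_apply, Equiv.swap_apply_def]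
  constructor
  · split_ifs with h₁ h₂
    · have h := (huv k).1
      rw [h₁, hx] at h
      rw [hx']
      rcases hu : u k with _ | z
      · trivial
      · rw [hu] at h
        exact le_of_lt (lt_of_lt_of_le hx'x h)
    · obtain rfl : k = n := by omega
      simpa [hx, hy] using hxy
    · exact (huv k).1
  · split_ifs with h₁ h₂
    · exact h₁ ▸ hnext
    · have h := (huv (n + 1)).2
      rw [hx'] at h
      rw [h₂, hx]
      rcases hu : u (n + 1 + 1) with _ | z
      · trivial
      · rw [hu] at h
        exact lt_trans (α := ℕ) h hx'x
    · exact (huv k).2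

theorem forall_oRel_gt (huv : Interlaces u v) (hv : StrictAntiOpt v) {L : ℕ}
    (hu : ∀ n, (u n).isSome → n < L) (hvL : ∀ n ≤ L, (v n).isSome)
    (hswap : ∀ n < L, ¬ Interlaces u (v ∘ Equiv.swap n (n + 1))) :
    ∀ n, oRel (· > ·) (v n) (u n) := by
  have step : ∀ n, oRel (· > ·) (v (n + 1)) (u (n + 1)) → oRel (· > ·) (v n) (u n) := by
    intro n hnext
    rcases hy : u n with _ | y
    · exact oRel_none_right
    have hnL := hu n (by simp [hy])
    obtain ⟨x, hx⟩ := Option.isSome_iff_exists.1 (hvL n hnL.le)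
    obtain ⟨x', hx'⟩ := Option.isSome_iff_exists.1 (hvL (n + 1) hnL)
    have hx'x : x' < x := by simpa [hx, hx'] using hv n (n + 1) (Nat.lt_succ_self n)
    rw [hx]
    by_contra hxy
    exact hswap n hnL (huv.comp_swap hx hx' hy hx'x (not_lt.1 hxy) hnext)
  suffices ∀ d n, L ≤ n + d → oRel (· > ·) (v n) (u n) from fun n => this L n (by omega)
  intro d
  induction d with
  | zero =>
    intro n hn
    rcases hy : u n with _ | y
    · exact oRel_none_right
    · exact absurd (hu n (by simp [hy])) (by omega)
  | succ d ih => exact fun n hn => step n (ih (n + 1) (by omega))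

end Interlaces

theorem forall_oRel_gt_of_unique {Λ : Symb} {u : ℕ → Option ℕ} {L : ℕ} (hreg : Regular Λ)
    (hΛ : StrictAntiOpt (interleaved Λ)) (hu : ∀ n, (u n).isSome → n < L)
    (hΛL : ∀ n ≤ L, (interleaved Λ n).isSome) (huΛ : Interlaces u (interleaved Λ))
    (huniq : ∀ Λ'' ∈ Sbar Λ, Λ''.1.card = Λ.1.card → Λ''.2.card = Λ.2.card →
      Interlaces u (interleaved Λ'') → Λ'' = Λ) :
    ∀ n, oRel (· > ·) (interleaved Λ n) (u n) := by
  refine huΛ.forall_oRel_gt hΛ hu hΛL fun n hn hswap => ?_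
  obtain ⟨x, hx⟩ := Option.isSome_iff_exists.1 (hΛL n hn.le)
  obtain ⟨y, hy⟩ := Option.isSome_iff_exists.1 (hΛL (n + 1) hn)
  obtain ⟨Λ'', hmem, h₁, h₂, hΛ''⟩ := exists_mem_Sbar_interleaved_eq_comp_swap hreg hΛ hx hy
  have hfix := congrFun hΛ'' n
  rw [huniq Λ'' hmem h₁ h₂ (hΛ'' ▸ hswap), comp_apply, Equiv.swap_apply_left, hx, hy] at hfix
  simpa [hx, hy, Option.some_inj.1 hfix] using hΛ n (n + 1) (Nat.lt_succ_self n)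

theorem forall_oRel_gt_of_setOf_DRel_left_eq_singleton {m : ℕ} {Z Z' : Symb}
    (hZ : IsSpecial1 Z m) (hZ' : IsSpecial0 Z' (m + 1)) (hreg : Regular Z')
    (hD : {Λ' | DRel Z Z' m (m + 1) Z Λ'} = {Z'}) :
    ∀ n, oRel (· > ·) (interleaved Z' n) (interleaved Z n) := by
  obtain ⟨hZ₁, hZ₂, -, -⟩ := hZ
  obtain ⟨hZ'₁, hZ'₂, hZ'ge₁, hZ'ge₂⟩ := hZ'
  have hZZ' : Z' ∈ {Λ' | DRel Z Z' m (m + 1) Z Λ'} := hD ▸ rfl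
  have hB : Bm1 Z Z' := (hZZ'.1.2.2.resolve_left fun h => by omega).2
  refine forall_oRel_gt_of_unique (L := 2 * m + 1) hreg
    (strictAntiOpt_interleaved hreg (by omega) (by omega) hZ'ge₁ hZ'ge₂)
    (fun n hn => ?_) (fun n hn => ?_) (bm1_iff_interlaces.1 hB).2.2 fun Λ'' hmem h₁ h₂ hint => ?_
  · rw [interleaved_isSome_iff (by omega) (by omega)] at hn
    omega
  · rw [interleaved_isSome_iff (by omega) (by omega)]
    omega
  · have h : Λ'' ∈ {Λ' | DRel Z Z' m (m + 1) Z Λ'} :=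
      ⟨⟨self_mem_Sbar Z, hmem, Or.inr ⟨rfl, bm1_iff_interlaces.2 ⟨by omega, by omega, hint⟩⟩⟩,
        hZ₁, hZ₂, by omega, by omega⟩
    rwa [hD] at h

theorem forall_oRel_gt_of_setOf_DRel_right_eq_singleton {m : ℕ} {Z Z' : Symb}
    (hZ : IsSpecial1 Z m) (hZ' : IsSpecial0 Z' m) (hreg : Regular Z)
    (hD : {Λ | DRel Z Z' m m Λ Z'} = {Z}) :
    ∀ n, oRel (· > ·) (interleaved Z n) (interleaved Z' n) := by
  obtain ⟨hZ₁, hZ₂, hZge₁, hZge₂⟩ := hZ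
  obtain ⟨hZ'₁, hZ'₂, -, -⟩ := hZ'
  have hZZ' : Z ∈ {Λ | DRel Z Z' m m Λ Z'} := hD ▸ rfl
  have hB : Bm Z Z' := (hZZ'.1.2.2.resolve_right fun h => by omega).2
  refine forall_oRel_gt_of_unique (L := 2 * m) hreg
    (strictAntiOpt_interleaved hreg (by omega) (by omega) hZge₁ hZge₂)
    (fun n hn => ?_) (fun n hn => ?_) (bm_iff_interlaces.1 hB).2.2 fun Λ'' hmem h₁ h₂ hint => ?_
  · rw [interleaved_isSome_iff (by omega) (by omega)] at hn
    omega
  · rw [interleaved_isSome_iff (by omega) (by omega)]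
    omega
  · have h : Λ'' ∈ {Λ | DRel Z Z' m m Λ Z'} :=
      ⟨⟨hmem, self_mem_Sbar Z', Or.inl ⟨rfl, bm_iff_interlaces.2 ⟨by omega, by omega, hint⟩⟩⟩,
        by omega, by omega, hZ'₁, hZ'₂⟩
    rwa [hD] at h

theorem stmt8_general (m m' : ℕ) (Z Z' : Symb)
    (hZ : IsSpecial1 Z m) (hZ' : IsSpecial0 Z' m') :
    (m' = m + 1 → Regular Z' → {Λ' | DRel Z Z' m m' Z Λ'} = {Z'} →
      ∀ i, oRel (· > ·) (ent Z'.1 i) (ent Z.1 i) ∧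
        oRel (· > ·) (ent Z'.2 i) (ent Z.2 i)) ∧
    (m' = m → Regular Z → {Λ | DRel Z Z' m m' Λ Z'} = {Z} →
      ∀ i, oRel (· > ·) (ent Z.1 i) (ent Z'.1 i) ∧
        oRel (· > ·) (ent Z.2 i) (ent Z'.2 i)) := by
  refine ⟨fun hm' hreg hD => ?_, fun hm' hreg hD => ?_⟩ <;> subst hm'
  · exact forall_oRel_ent_of_interleaved
      (forall_oRel_gt_of_setOf_DRel_left_eq_singleton hZ hZ' hreg hD)
  · exact forall_oRel_ent_of_interleaved
      (forall_oRel_gt_of_setOf_DRel_right_eq_singleton hZ hZ' hreg hD)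

theorem stmt8 (m m' : ℕ) (Z Z' : Symb) (hm : m' = m ∨ m' = m + 1)
    (hZ : IsSpecial1 Z m) (hZ' : IsSpecial0 Z' m') :
    (m' = m + 1 → Regular Z' → {Λ' | DRel Z Z' m m' Z Λ'} = {Z'} →
      ∀ i, oRel (· > ·) (ent Z'.1 i) (ent Z.1 i) ∧
        oRel (· > ·) (ent Z'.2 i) (ent Z.2 i)) ∧
    (m' = m → Regular Z → {Λ | DRel Z Z' m m' Λ Z'} = {Z} →
      ∀ i, oRel (· > ·) (ent Z.1 i) (ent Z'.1 i) ∧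
        oRel (· > ·) (ent Z.2 i) (ent Z'.2 i)) :=
  stmt8_general m m' Z Z' hZ hZ'
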